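/- Let (U_n)_{n≥0} be a SVLMC defined by a probabilized context tree (T,(q_c)_{c∈C}) and let π be any stationary probability measure on L. Then for every finite word w = α₁…α_N over A, π(w) = ∏_{k=0}^{N−1} q_{pref(α₁…α_k)}(α_{k+1}), where for k = 0 the word α₁…α_k is the empty word ∅, pref(∅) = ∅, q_∅(α) = π(α) and π(∅) = π(L) = 1. -/

import Mathlib

/-!
Since the chain only appends one letter on the right, stationarity gives
`π(ub) = ∫_{Lu} κ(s, Lub) dπ(s)`. If `ū` is not an internal node of the tree, all states
`s ∈ Lu` share the context `c` whose reversal is a suffix of `u`, so the integrand is the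
constant `q_c(b)` and `π(ub) = π(u) q_c(b)`. If `ū` is internal, `q_u(b) = π(ub)/π(u)` by
definition, and the degenerate case `π(u) = 0` is covered by `π(ub) ≤ π(u)`.
Induction on the length of `w` then gives the product formula.
-/

open MeasureTheory
open ProbabilityTheory (Kernel IsMarkovKernel)
open scoped ENNReal

namespace VLMC

/-- Left-infinite sequences over the alphabet `{0,1}`; `s 0` is the rightmost
(most recent) letter, `s 1` the one before it, etc. -/
abbrev L : Type := ℕ → Bool

/-- Append the letter `b` on the right of the left-infinite sequence `s`. -/
def extend (b : Bool) (s : L) : L := fun n => match n with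
  | 0 => b
  | k + 1 => s k

/-- Sequences whose letters, read from the rightmost one leftwards, start with `u`. -/
def cylRev (u : List Bool) : Set L := {s | ∀ i < u.length, s i = u.getD i false}

/-- The cylinder `Lw` of left-infinite sequences admitting the finite word `w` as a suffix. -/
def cyl (w : List Bool) : Set L := cylRev w.reverse

/-- A (saturated) context tree: a prefix-closed set of finite words containing the
empty word, in which every node having one child has both children. A node
`[α₁, …, α_N]` corresponds to the word `α₁…α_N`, matched against a left-infinite
sequence `s` via `s 0 = α₁, …, s (N-1) = α_N`. -/
def IsContextTree (T : List Bool → Prop) : Prop :=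
  T [] ∧ (∀ u b, T (u ++ [b]) → T u) ∧ (∀ u b, T (u ++ [b]) → T (u ++ [!b]))

/-- Finite leaves (finite contexts) of a context tree. -/
def IsLeaf (T : List Bool → Prop) (c : List Bool) : Prop :=
  T c ∧ ∀ b, ¬ T (c ++ [b])

/-- Infinite leaves (infinite contexts), seen as the left-infinite sequences they match. -/
def IsInfLeaf (T : List Bool → Prop) (s : L) : Prop :=
  ∀ n, T (List.ofFn fun i : Fin n => s i)

/-- `κ` is the transition kernel of the VLMC associated with the probabilized
context tree `(T, qF, qI)` : from a state `s` whose context is the finite leaf `c`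
(resp. an infinite leaf), a letter `α` is appended on the right with probability
`qF c α` (resp. `qI s α`). -/
def IsVLMCKernel (T : List Bool → Prop) (qF : List Bool → Bool → ℝ≥0∞)
    (qI : L → Bool → ℝ≥0∞) (κ : Kernel L L) : Prop :=
  (∀ c, IsLeaf T c → ∀ s ∈ cylRev c,
      κ s = qF c false • Measure.dirac (extend false s)
          + qF c true • Measure.dirac (extend true s)) ∧
  (∀ s, IsInfLeaf T s →
      κ s = qI s false • Measure.dirac (extend false s)
          + qI s true • Measure.dirac (extend true s))

/-- `π` is a stationary (invariant) probability measure for the kernel `κ`. -/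
def IsStationary (κ : Kernel L L) (π : Measure L) : Prop :=
  ∀ B : Set L, MeasurableSet B → π B = ∫⁻ s, κ s B ∂π


attribute [local instance] Classical.propDecidable

/-- The context associated with a finite word `w` whose reversed word is not an
internal node : the unique finite context `c` such that `c̄` is a suffix of `w`
(junk value `[]` if there is none). -/
noncomputable def prefLeafWord (T : List Bool → Prop) (w : List Bool) : List Bool :=
  if h : ∃ c, IsLeaf T c ∧ c <+: w.reverse then h.choose else []

/-- The one-step conditional probability `q_{pref(w)}(b)` : if `w̄` is an internal
node of the tree, it is `π(wb)/π(w)` (and `0` if `π(w) = 0`); otherwise it is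
`q_c(b)` for the unique context `c` whose reversed word is a suffix of `w`. -/
noncomputable def qext (T : List Bool → Prop) (qF : List Bool → Bool → ℝ≥0∞)
    (π : Measure L) (w : List Bool) (b : Bool) : ℝ≥0∞ :=
  if T w.reverse ∧ (∃ b', T (w.reverse ++ [b'])) then
    (if π (cyl w) = 0 then 0 else π (cyl (w ++ [b])) / π (cyl w))
  else qF (prefLeafWord T w) b

lemma _root_.List.eq_prod_range_take_getD {α M : Type*} [CommMonoid M] (d : α)
    (g : List α → M) (q : List α → α → M) (h_nil : g [] = 1)
    (h_append : ∀ u b, g (u ++ [b]) = g u * q u b) (w : List α) :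
    g w = ∏ k ∈ Finset.range w.length, q (w.take k) (w.getD k d) := by
  induction w using List.reverseRecOn with
  | nil => simp [h_nil]
  | append_singleton u b ih =>
    have h_take_getD : ∀ k ∈ Finset.range u.length,
        q ((u ++ [b]).take k) ((u ++ [b]).getD k d) = q (u.take k) (u.getD k d) := by
      intro k hk
      rw [Finset.mem_range] at hk
      rw [List.take_append_of_le_length hk.le, List.getD_append _ _ _ _ hk]
    rw [h_append, ih, List.length_append, List.length_singleton, Finset.prod_range_succ,
      Finset.prod_congr rfl h_take_getD, List.take_left, List.getD_append_right _ _ _ _ le_rfl,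
      Nat.sub_self, List.getD_cons_zero]

section Cylinders

lemma measurableSet_cylRev (v : List Bool) : MeasurableSet (cylRev v) := by
  have h : cylRev v = ⋂ i, ⋂ (_ : i < v.length), (fun s : L => s i) ⁻¹' {v.getD i false} := by
    ext s
    simp only [cylRev, Set.mem_iInter, Set.mem_preimage, Set.mem_singleton_iff,
      Set.mem_ofPred_eq]
  rw [h]
  exact MeasurableSet.iInter fun i => MeasurableSet.iInter fun _ =>
    measurable_pi_apply i (measurableSet_singleton _)

lemma measurableSet_cyl (w : List Bool) : MeasurableSet (cyl w) := measurableSet_cylRev _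

@[simp]
lemma cyl_nil : cyl [] = Set.univ := by
  ext s
  simp [cyl, cylRev]

lemma cylRev_subset_of_prefix {u v : List Bool} (h : u <+: v) : cylRev v ⊆ cylRev u := by
  obtain ⟨t, rfl⟩ := h
  intro s hs i hi
  rw [← List.getD_append _ t _ _ hi]
  exact hs i (by simp only [List.length_append]; omega)

lemma mem_cylRev_ofFn (s : L) (n : ℕ) : s ∈ cylRev (List.ofFn fun i : Fin n => s i) := by
  intro i hi
  rw [List.getD_eq_getElem _ false hi, List.getElem_ofFn]

lemma extend_mem_cyl_append_iff {s : L} {u : List Bool} {a b : Bool} :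
    extend a s ∈ cyl (u ++ [b]) ↔ a = b ∧ s ∈ cyl u := by
  simp only [cyl, List.reverse_append, List.reverse_singleton, List.singleton_append]
  constructor
  · intro h
    refine ⟨by simpa [extend] using h 0 (by simp), fun i hi => ?_⟩
    simpa [extend] using h (i + 1) (by simpa using hi)
  · rintro ⟨rfl, hs⟩ (_ | i) hi
    · simp [extend]
    · simpa [extend] using hs i (by simpa using hi)

lemma sum_dirac_extend_apply_cyl_append (q : Bool → ℝ≥0∞) (s : L) (u : List Bool) (b : Bool) :
    (q false • Measure.dirac (extend false s) + q true • Measure.dirac (extend true s))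
        (cyl (u ++ [b])) = (cyl u).indicator (fun _ => q b) s := by
  by_cases hs : s ∈ cyl u <;> cases b <;>
    simp [Measure.dirac_apply', measurableSet_cyl, extend_mem_cyl_append_iff, hs]

end Cylinders

namespace IsContextTree

variable {T : List Bool → Prop} (hT : IsContextTree T)
include hT

lemma mem_of_prefix {u v : List Bool} (hv : T v) (h : u <+: v) : T u := by
  induction v using List.reverseRecOn with
  | nil => rwa [List.prefix_nil.mp h]
  | append_singleton v b ih =>
    rcases List.prefix_concat_iff.mp h with rfl | h
    · exact hv
    · exact ih (hT.2.1 v b hv) h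

lemma mem_append_singleton_of_mem {u : List Bool} {a : Bool} (h : T (u ++ [a])) (b : Bool) :
    T (u ++ [b]) := by
  cases a <;> cases b <;> first | exact h | exact hT.2.2 _ _ h

lemma leaf_eq_of_prefix {c v : List Bool} (hc : IsLeaf T c) (hcv : c <+: v) (hv : T v) :
    c = v := by
  obtain ⟨_ | ⟨x, t⟩, rfl⟩ := hcv
  · simp
  · exact absurd (hT.mem_of_prefix hv ⟨t, by simp⟩) (hc.2 x)

lemma leaf_unique {c₁ c₂ v : List Bool} (h₁ : IsLeaf T c₁) (h₂ : IsLeaf T c₂)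
    (p₁ : c₁ <+: v) (p₂ : c₂ <+: v) : c₁ = c₂ := by
  rcases List.prefix_or_prefix_of_prefix p₁ p₂ with h | h
  · exact hT.leaf_eq_of_prefix h₁ h h₂.1
  · exact (hT.leaf_eq_of_prefix h₂ h h₁.1).symm

lemma exists_leaf_prefix {v : List Bool} (hv : ¬ (T v ∧ ∃ b, T (v ++ [b]))) :
    ∃ c, IsLeaf T c ∧ c <+: v := by
  induction v using List.reverseRecOn with
  | nil => exact ⟨[], ⟨hT.1, fun b hb => hv ⟨hT.1, b, hb⟩⟩, List.prefix_refl _⟩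
  | append_singleton u b ih =>
    by_cases hu : T u ∧ ∃ b', T (u ++ [b'])
    · obtain ⟨-, b', hb'⟩ := hu
      have hv' := hT.mem_append_singleton_of_mem hb' b
      exact ⟨u ++ [b], ⟨hv', fun x hx => hv ⟨hv', x, hx⟩⟩, List.prefix_refl _⟩
    · obtain ⟨c, hc, hcu⟩ := ih hu
      exact ⟨c, hc, hcu.trans (List.prefix_append u [b])⟩

lemma exists_leaf_or_isInfLeaf (s : L) :
    (∃ c, IsLeaf T c ∧ s ∈ cylRev c) ∨ IsInfLeaf T s := by
  by_cases hs : IsInfLeaf T s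
  · exact Or.inr hs
  · left
    obtain ⟨n, hn⟩ : ∃ n, ¬ T (List.ofFn fun i : Fin n => s i) := by
      simpa [IsInfLeaf] using hs
    obtain ⟨c, hc, hcv⟩ := hT.exists_leaf_prefix (fun h => hn h.1)
    exact ⟨c, hc, cylRev_subset_of_prefix hcv (mem_cylRev_ofFn s n)⟩

lemma prefLeafWord_eq {u c : List Bool} (hc : IsLeaf T c) (hcu : c <+: u.reverse) :
    prefLeafWord T u = c := by
  have h : ∃ c', IsLeaf T c' ∧ c' <+: u.reverse := ⟨c, hc, hcu⟩
  rw [prefLeafWord, dif_pos h]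
  exact hT.leaf_unique h.choose_spec.1 hc h.choose_spec.2 hcu

end IsContextTree

namespace IsVLMCKernel

variable {T : List Bool → Prop} {qF : List Bool → Bool → ℝ≥0∞} {qI : L → Bool → ℝ≥0∞}
  {κ : Kernel L L}

lemma exists_eq_sum_dirac (hκ : IsVLMCKernel T qF qI κ) (hT : IsContextTree T) (s : L) :
    ∃ q : Bool → ℝ≥0∞,
      κ s = q false • Measure.dirac (extend false s) + q true • Measure.dirac (extend true s) := by
  rcases hT.exists_leaf_or_isInfLeaf s with ⟨c, hc, hsc⟩ | hs
  · exact ⟨qF c, hκ.1 c hc s hsc⟩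
  · exact ⟨qI s, hκ.2 s hs⟩

lemma apply_cyl_append_eq_zero (hκ : IsVLMCKernel T qF qI κ) (hT : IsContextTree T)
    {s : L} {u : List Bool} (hs : s ∉ cyl u) (b : Bool) : κ s (cyl (u ++ [b])) = 0 := by
  obtain ⟨q, hq⟩ := hκ.exists_eq_sum_dirac hT s
  rw [hq, sum_dirac_extend_apply_cyl_append, Set.indicator_of_notMem hs]

lemma apply_cyl_append_of_not_internal (hκ : IsVLMCKernel T qF qI κ) (hT : IsContextTree T)
    {u : List Bool} (hu : ¬ (T u.reverse ∧ ∃ b, T (u.reverse ++ [b]))) {s : L} (hs : s ∈ cyl u)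
    (b : Bool) : κ s (cyl (u ++ [b])) = qF (prefLeafWord T u) b := by
  obtain ⟨c, hc, hcu⟩ := hT.exists_leaf_prefix hu
  rw [hκ.1 c hc s (cylRev_subset_of_prefix hcu hs), sum_dirac_extend_apply_cyl_append,
    Set.indicator_of_mem hs, hT.prefLeafWord_eq hc hcu]

end IsVLMCKernel

namespace IsStationary

variable {T : List Bool → Prop} {qF : List Bool → Bool → ℝ≥0∞} {qI : L → Bool → ℝ≥0∞}
  {κ : Kernel L L} {π : Measure L}

lemma measure_cyl_append (hπ : IsStationary κ π) (hκ : IsVLMCKernel T qF qI κ)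
    (hT : IsContextTree T) (u : List Bool) (b : Bool) :
    π (cyl (u ++ [b])) = ∫⁻ s in cyl u, κ s (cyl (u ++ [b])) ∂π := by
  rw [hπ _ (measurableSet_cyl _), ← lintegral_indicator (measurableSet_cyl u)]
  refine lintegral_congr fun s => ?_
  by_cases hs : s ∈ cyl u
  · rw [Set.indicator_of_mem hs]
  · rw [Set.indicator_of_notMem hs, hκ.apply_cyl_append_eq_zero hT hs]

lemma measure_cyl_append_le [IsMarkovKernel κ] (hπ : IsStationary κ π)
    (hκ : IsVLMCKernel T qF qI κ) (hT : IsContextTree T) (u : List Bool) (b : Bool) :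
    π (cyl (u ++ [b])) ≤ π (cyl u) :=
  calc π (cyl (u ++ [b])) = ∫⁻ s in cyl u, κ s (cyl (u ++ [b])) ∂π :=
        hπ.measure_cyl_append hκ hT u b
    _ ≤ ∫⁻ _ in cyl u, 1 ∂π := lintegral_mono fun _ => prob_le_one
    _ = π (cyl u) := by rw [setLIntegral_one]

lemma measure_cyl_append_eq_mul_qext [IsMarkovKernel κ] [IsFiniteMeasure π]
    (hπ : IsStationary κ π) (hκ : IsVLMCKernel T qF qI κ) (hT : IsContextTree T)
    (u : List Bool) (b : Bool) :
    π (cyl (u ++ [b])) = π (cyl u) * qext T qF π u b := by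
  by_cases hu : T u.reverse ∧ ∃ b', T (u.reverse ++ [b'])
  · rw [qext, if_pos hu]
    split_ifs with h0
    · rw [mul_zero, ← nonpos_iff_eq_zero, ← h0]
      exact hπ.measure_cyl_append_le hκ hT u b
    · rw [ENNReal.mul_div_cancel h0 (measure_ne_top π _)]
  · rw [qext, if_neg hu, hπ.measure_cyl_append hκ hT,
      setLIntegral_congr_fun (measurableSet_cyl u)
        (fun s hs => hκ.apply_cyl_append_of_not_internal hT hu hs b),
      setLIntegral_const, mul_comm]

end IsStationary

theorem stationary_product_formula_general
    (T : List Bool → Prop) (qF : List Bool → Bool → ℝ≥0∞) (qI : L → Bool → ℝ≥0∞)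
    (hT : IsContextTree T)
    (κ : Kernel L L) [IsMarkovKernel κ] (hκ : IsVLMCKernel T qF qI κ)
    (π : Measure L) [IsProbabilityMeasure π] (hπ : IsStationary κ π)
    (w : List Bool) :
    π (cyl w) = ∏ k ∈ Finset.range w.length, qext T qF π (w.take k) (w.getD k false) :=
  List.eq_prod_range_take_getD false (fun w => π (cyl w)) (qext T qF π)
    (by rw [cyl_nil, measure_univ]) (hπ.measure_cyl_append_eq_mul_qext hκ hT) w

/-- For a SVLMC with stationary probability measure `π`,
for every finite word `w = α₁…α_N`,
`π(w) = ∏_{k=0}^{N-1} q_{pref(α₁…α_k)}(α_{k+1})`. -/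
theorem stationary_product_formula
    (T : List Bool → Prop) (qF : List Bool → Bool → ℝ≥0∞) (qI : L → Bool → ℝ≥0∞)
    (hT : IsContextTree T)
    (hcount : Set.Countable {s : L | IsInfLeaf T s})
    (hqF : ∀ c, IsLeaf T c → qF c false + qF c true = 1)
    (hqI : ∀ s, IsInfLeaf T s → qI s false + qI s true = 1)
    (κ : Kernel L L) [IsMarkovKernel κ] (hκ : IsVLMCKernel T qF qI κ)
    (π : Measure L) [IsProbabilityMeasure π] (hπ : IsStationary κ π)
    (w : List Bool) :
    π (cyl w) = ∏ k ∈ Finset.range w.length, qext T qF π (w.take k) (w.getD k false) :=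
  stationary_product_formula_general T qF qI hT κ hκ π hπ w

end VLMC
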